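/- Stable Voting satisfies the Condorcet criterion: if A is a Condorcet winner in an election profile P, then A is the unique Stable Voting winner in P, i.e., SV(P) = {A}. -/
import Mathlib


/-- An election profile: a finite set of candidates and, for each voter,
a strict linear order (ballot) on the candidates.  `ballot v a b = true`
means that voter `v` ranks candidate `a` above candidate `b`. -/
structure Profile (C V : Type) [DecidableEq C] [Fintype V] where
  cands : Finset C
  ballot : V → C → C → Bool
  ballot_irrefl : ∀ v a, a ∈ cands → ballot v a a = false
  ballot_asymm_total : ∀ v a b, a ∈ cands → b ∈ cands → a ≠ b →
    (ballot v a b = true ↔ ¬ ballot v b a = true)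
  ballot_trans : ∀ v a b c, a ∈ cands → b ∈ cands → c ∈ cands →
    ballot v a b = true → ballot v b c = true → ballot v a c = true

variable {C V : Type} [DecidableEq C] [Fintype V]

/-- The margin of `a` vs. `b`: the number of voters ranking `a` above `b`
minus the number of voters ranking `b` above `a`. -/
def Profile.margin (P : Profile C V) (a b : C) : ℤ :=
  ((Finset.univ.filter fun v => P.ballot v a b = true).card : ℤ) -
  ((Finset.univ.filter fun v => P.ballot v b a = true).card : ℤ)

/-- The restriction of a profile to a subset `S` of the candidates. -/
def Profile.restrict (P : Profile C V) (S : Finset C) : Profile C V where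
  cands := P.cands ∩ S
  ballot := P.ballot
  ballot_irrefl := fun v a ha => P.ballot_irrefl v a (Finset.mem_inter.mp ha).1
  ballot_asymm_total := fun v a b ha hb => P.ballot_asymm_total v a b
    (Finset.mem_inter.mp ha).1 (Finset.mem_inter.mp hb).1
  ballot_trans := fun v a b c ha hb hc => P.ballot_trans v a b c
    (Finset.mem_inter.mp ha).1 (Finset.mem_inter.mp hb).1 (Finset.mem_inter.mp hc).1

/-- The profile `P₋B` obtained from `P` by removing candidate `b` from all ballots. -/
def Profile.remove (P : Profile C V) (b : C) : Profile C V :=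
  P.restrict (P.cands.erase b)

/-- Auxiliary, fuel-based definition of the Stable Voting winners. -/
def SVaux : ℕ → Profile C V → Set C
  | 0, P => ↑P.cands
  | n + 1, P =>
    if P.cands.card ≤ 1 then ↑P.cands
    else { a | ∃ b ∈ P.cands, b ≠ a ∧ a ∈ SVaux n (P.remove b) ∧
      ∀ x ∈ P.cands, ∀ y ∈ P.cands, x ≠ y → x ∈ SVaux n (P.remove y) →
        P.margin x y ≤ P.margin a b }

/-- The set of Stable Voting winners of a profile.  If there is a single
candidate, that candidate wins; otherwise `a` is a winner iff there is a
candidate `b ≠ a` such that `a` is a Stable Voting winner after removing `b`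
and the margin of `a` vs. `b` is maximal among margins of pairs `(x, y)` of
distinct candidates such that `x` is a Stable Voting winner after removing `y`. -/
def SV (P : Profile C V) : Set C := SVaux P.cands.card P

/-- `a` beats `b` head-to-head: the margin of `a` vs. `b` is positive. -/
def Profile.beats (P : Profile C V) (a b : C) : Prop := 0 < P.margin a b

/-- A Condorcet winner: a candidate beating every other candidate head-to-head. -/
def CondorcetWinner (P : Profile C V) (a : C) : Prop :=
  a ∈ P.cands ∧ ∀ b ∈ P.cands, b ≠ a → P.beats a b

/-- `S` is a nonempty set of candidates each of whose members beats each
nonmember head-to-head. -/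
def Dominant (P : Profile C V) (S : Finset C) : Prop :=
  S ⊆ P.cands ∧ S.Nonempty ∧ ∀ a ∈ S, ∀ b ∈ P.cands, b ∉ S → P.beats a b

/-- `S` is the Smith set of `P`: the smallest nonempty set of candidates each
of whose members beats each nonmember head-to-head. -/
def IsSmith (P : Profile C V) (S : Finset C) : Prop :=
  Dominant P S ∧ ∀ T, Dominant P T → S ⊆ T

/-- A profile is uniquely weighted if distinct ordered pairs of distinct
candidates have distinct margins. -/
def UniquelyWeighted (P : Profile C V) : Prop :=
  ∀ a b a' b', a ∈ P.cands → b ∈ P.cands → a' ∈ P.cands → b' ∈ P.cands →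
    a ≠ b → a' ≠ b' → (a, b) ≠ (a', b') → P.margin a b ≠ P.margin a' b'

/-- `a` is stable for SV in `P`: there is a candidate `b` whom `a` beats
head-to-head such that `a` is a Stable Voting winner in `P₋b`. -/
def StableFor (P : Profile C V) (a : C) : Prop :=
  ∃ b ∈ P.cands, P.beats a b ∧ a ∈ SV (P.remove b)

lemma margin_neg (P : Profile C V) (a b : C) : P.margin a b = -P.margin b a := by
  simp only [Profile.margin]; ring

lemma remove_margin (P : Profile C V) (b x y : C) :
    (P.remove b).margin x y = P.margin x y := rfl

lemma remove_cands (P : Profile C V) (b : C) :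
    (P.remove b).cands = P.cands.erase b := by
  simp only [Profile.remove, Profile.restrict]
  exact Finset.inter_eq_right.mpr (Finset.erase_subset _ _)

lemma remove_condorcet (P : Profile C V) (A b : C) (hCW : CondorcetWinner P A)
    (hb : b ≠ A) : CondorcetWinner (P.remove b) A := by
  obtain ⟨hA, hbeats⟩ := hCW
  refine ⟨?_, ?_⟩
  · rw [remove_cands]; exact Finset.mem_erase.mpr ⟨Ne.symm hb, hA⟩
  · intro c hc hcA
    rw [remove_cands, Finset.mem_erase] at hc
    exact hbeats c hc.2 hcA

lemma svaux_subset (n : ℕ) (P : Profile C V) : SVaux n P ⊆ ↑P.cands := by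
  induction n generalizing P with
  | zero => simp [SVaux]
  | succ n ih =>
    intro a ha
    rw [SVaux] at ha
    split at ha
    · exact ha
    · obtain ⟨b, hb, _, haSV, _⟩ := ha
      have := ih (P.remove b) haSV
      rw [remove_cands] at this
      exact Finset.erase_subset _ _ this

lemma svaux_condorcet (n : ℕ) (P : Profile C V) (A : C)
    (hn : P.cands.card = n) (hCW : CondorcetWinner P A) : SVaux n P = {A} := by
  induction n generalizing P with
  | zero =>
    exact absurd hCW.1 (by rw [Finset.card_eq_zero.mp hn]; exact Finset.notMem_empty A)
  | succ n ih =>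
    obtain ⟨hA, hbeats⟩ := hCW
    rw [SVaux]
    by_cases hcard : P.cands.card ≤ 1
    · have h1 : P.cands.card = 1 := le_antisymm hcard (Finset.card_pos.mpr ⟨A, hA⟩)
      obtain ⟨x, hx⟩ := Finset.card_eq_one.mp h1
      have : A = x := by rwa [hx, Finset.mem_singleton] at hA
      simp [hcard, hx, this]
    · simp only [if_neg hcard]
      have hn2 : 2 ≤ P.cands.card := by omega
      -- key facts
      have hrimem : ∀ y ∈ P.cands, (P.remove y).cands.card = n := by
        intro y hy
        rw [remove_cands, Finset.card_erase_of_mem hy, hn]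
        omega
      have hIH : ∀ y ∈ P.cands, y ≠ A → SVaux n (P.remove y) = {A} := by
        intro y hy hyA
        exact ih (P.remove y) (hrimem y hy) (remove_condorcet P A y ⟨hA, hbeats⟩ hyA)
      ext a
      simp only [Set.mem_setOf_eq, Set.mem_singleton_iff]
      constructor
      · rintro ⟨b, hb, hba, haSV, hmax⟩
        by_cases hbA : b = A
        · exfalso
          have haC : a ∈ P.cands := by
            have := svaux_subset n (P.remove b) haSV
            rw [remove_cands] at this
            exact Finset.erase_subset _ _ this
          have haA : a ≠ A := by rw [← hbA]; exact fun h => hba h.symm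
          have hAin : A ∈ SVaux n (P.remove a) := by
            rw [hIH a haC haA]; rfl
          have hle := hmax A hA a haC (Ne.symm haA) hAin
          have hbeat : 0 < P.margin A a := hbeats a haC haA
          rw [hbA, margin_neg P a A] at hle
          omega
        · have := hIH b hb hbA
          rw [this] at haSV
          exact haSV
      · rintro rfl
        have hne : (P.cands.erase a).Nonempty := by
          rw [← Finset.card_pos, Finset.card_erase_of_mem hA]; omega
        obtain ⟨b, hb, hbmax⟩ := Finset.exists_max_image (P.cands.erase a)
          (fun y => P.margin a y) hne
        obtain ⟨hbA, hbC⟩ := Finset.mem_erase.mp hb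
        refine ⟨b, hbC, hbA, ?_, ?_⟩
        · rw [hIH b hbC hbA]; rfl
        · intro x hx y hy hxy hxSV
          have hAb : 0 < P.margin a b := hbeats b hbC hbA
          by_cases hyA : y = a
          · subst hyA
            have hxA : 0 < P.margin y x := hbeats x hx hxy
            rw [margin_neg P x y]
            omega
          · have := hIH y hy hyA
            rw [this, Set.mem_singleton_iff] at hxSV
            subst hxSV
            exact hbmax y (Finset.mem_erase.mpr ⟨hyA, hy⟩)

/-- Stable Voting satisfies the Condorcet criterion: a Condorcet
winner is the unique Stable Voting winner. -/
theorem sv_condorcet_criterion (P : Profile C V) (A : C)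
    (hCW : CondorcetWinner P A) :
    SV P = {A} := by
  exact svaux_condorcet _ P A rfl hCW
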